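/- arXiv:2005.07167 — 11 statements merged into one kernel-verified Lean document; each statement's English description precedes it below -/
import Mathlib

section
/- For all natural numbers t, |κ₂(t+1) − κ₂(t)| ≤ 2, where κ₂ satisfies κ₂(0)=0, κ₂(2t)=κ₂(t), κ₂(2t+1)=(κ₂(t)+κ₂(t+1))/2+1. -/
/-! Writing `d t = κ₂ (t + 1) - κ₂ t`, the recurrence gives `d 0 = 2`, `d (2s) = d s / 2 + 1` and
`d (2s + 1) = d s / 2 - 1`. The map `x ↦ x / 2 ± 1` sends `[-2, 2]` into itself, so binary induction
on `t` keeps `|d t| ≤ 2`. -/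

section

variable {K : Type*} [Field K] [LinearOrder K] [IsStrictOrderedRing K] {f : ℕ → K}

theorem abs_half_add_le_two {x c : K} (hx : |x| ≤ 2) (hc : |c| ≤ 1) : |x / 2 + c| ≤ 2 := by
  rw [abs_le] at *
  constructor <;> linarith [hx.1, hx.2, hc.1, hc.2]

theorem sub_eq_two_of_recurrence (ho : ∀ t, f (2 * t + 1) = (f t + f (t + 1)) / 2 + 1) :
    f 1 - f 0 = 2 := by
  have h := ho 0
  simp only [mul_zero, zero_add] at h
  linarith

theorem sub_double_of_recurrence (he : ∀ t, f (2 * t) = f t)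
    (ho : ∀ t, f (2 * t + 1) = (f t + f (t + 1)) / 2 + 1) (t : ℕ) :
    f (2 * t + 1) - f (2 * t) = (f (t + 1) - f t) / 2 + 1 := by
  rw [ho, he]
  ring

theorem sub_double_add_one_of_recurrence (he : ∀ t, f (2 * t) = f t)
    (ho : ∀ t, f (2 * t + 1) = (f t + f (t + 1)) / 2 + 1) (t : ℕ) :
    f (2 * t + 1 + 1) - f (2 * t + 1) = (f (t + 1) - f t) / 2 + -1 := by
  rw [show 2 * t + 1 + 1 = 2 * (t + 1) by ring, he, ho]
  ring

theorem abs_sub_le_two_of_recurrence (he : ∀ t, f (2 * t) = f t)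
    (ho : ∀ t, f (2 * t + 1) = (f t + f (t + 1)) / 2 + 1) (t : ℕ) :
    |f (t + 1) - f t| ≤ 2 := by
  induction t using Nat.evenOddRec with
  | h0 => rw [zero_add, sub_eq_two_of_recurrence ho, abs_two]
  | h_even s ih =>
    rw [sub_double_of_recurrence he ho]
    exact abs_half_add_le_two ih (by rw [abs_one])
  | h_odd s ih =>
    rw [sub_double_add_one_of_recurrence he ho]
    exact abs_half_add_le_two ih (by rw [abs_neg, abs_one])

end

theorem stmt_1_general (κ2 : ℕ → ℚ)
    (h2e : ∀ t, κ2 (2*t) = κ2 t)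
    (h2o : ∀ t, κ2 (2*t+1) = (κ2 t + κ2 (t+1))/2 + 1) : ∀ t : ℕ, |κ2 (t+1) - κ2 t| ≤ 2 :=
  abs_sub_le_two_of_recurrence h2e h2o

theorem stmt_1 (κ2 : ℕ → ℚ) (h2z : κ2 0 = 0)
    (h2e : ∀ t, κ2 (2*t) = κ2 t)
    (h2o : ∀ t, κ2 (2*t+1) = (κ2 t + κ2 (t+1))/2 + 1) : ∀ t : ℕ, |κ2 (t+1) - κ2 t| ≤ 2 :=
  stmt_1_general κ2 h2e h2o
end

section
/- Let M(t) denote the number of maximal blocks of consecutive 1s in the binary expansion of t. Then for all t ≥ 1, κ₂(t) ≥ M(t), where κ₂ satisfies κ₂(0)=0, κ₂(2t)=κ₂(t), κ₂(2t+1)=(κ₂(t)+κ₂(t+1))/2+1. -/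
/-- The number of maximal blocks of consecutive 1s in the binary expansion of `t`:
each such block is counted at its most significant bit. -/
def blockCount (t : ℕ) : ℕ :=
  ((Finset.range (t+1)).filter (fun i => t.testBit i = true ∧ t.testBit (i+1) = false)).card

/-
Writing B = blockCount, one has B(2t) = B(t) and B(2t+1) = B(t) + [t even], and a step
s ↦ s + 1 destroys at most one block, and only when s is odd: B(s) ≤ B(s+1) + (s mod 2).
Together these give 2 B(2u+1) ≤ B(u) + B(u+1) + 2, which is exactly what the recurrence of
κ₂ needs for a strong induction on t.
-/

@[simp] lemma blockCount_zero : blockCount 0 = 0 := rfl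

lemma blockCount_one : blockCount 1 = 1 := rfl

lemma blockCount_eq_sum {t n : ℕ} (h : t < n) :
    blockCount t = ∑ i ∈ Finset.range n,
      if t.testBit i = true ∧ t.testBit (i + 1) = false then 1 else 0 := by
  rw [blockCount, Finset.card_filter]
  refine Finset.sum_subset (Finset.range_subset_range.2 h) fun i _ hi => ?_
  have hti : t < 2 ^ i := by
    rw [Finset.mem_range, not_lt] at hi
    exact (Nat.lt_of_succ_le hi).trans Nat.lt_two_pow_self
  simp [Nat.testBit_lt_two_pow hti]

lemma blockCount_eq_blockCount_div_two_add (s : ℕ) :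
    blockCount s = blockCount (s / 2) +
      if s.testBit 0 = true ∧ (s / 2).testBit 0 = false then 1 else 0 := by
  rw [blockCount_eq_sum (n := s / 2 * 2 + 2) (by omega), Finset.sum_range_succ',
    blockCount_eq_sum (n := s / 2 * 2 + 1) (by omega)]
  simp only [Nat.testBit_add_one, zero_add]

lemma blockCount_two_mul (t : ℕ) : blockCount (2 * t) = blockCount t := by
  simpa [Nat.testBit_zero] using blockCount_eq_blockCount_div_two_add (2 * t)

lemma blockCount_two_mul_add_one_add_mod_two (t : ℕ) :
    blockCount (2 * t + 1) + t % 2 = blockCount t + 1 := by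
  have h := blockCount_eq_blockCount_div_two_add (2 * t + 1)
  have hdiv : (2 * t + 1) / 2 = t := by omega
  rw [hdiv] at h
  rcases Nat.mod_two_eq_zero_or_one t with ht | ht <;> simp [Nat.testBit_zero, ht] at h <;> omega

lemma blockCount_le_blockCount_succ_add_mod_two (s : ℕ) :
    blockCount s ≤ blockCount (s + 1) + s % 2 := by
  induction s using Nat.evenOddRec with
  | h0 => simp
  | h_even u _ =>
    have := blockCount_two_mul_add_one_add_mod_two u
    rw [blockCount_two_mul]
    omega
  | h_odd u ih =>
    have := blockCount_two_mul_add_one_add_mod_two u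
    rw [show 2 * u + 1 + 1 = 2 * (u + 1) by ring, blockCount_two_mul]
    omega

lemma two_mul_blockCount_two_mul_add_one_le (u : ℕ) :
    2 * blockCount (2 * u + 1) ≤ blockCount u + blockCount (u + 1) + 2 := by
  have := blockCount_two_mul_add_one_add_mod_two u
  have := blockCount_le_blockCount_succ_add_mod_two u
  omega

theorem stmt_3 (κ2 : ℕ → ℚ) (h2z : κ2 0 = 0)
    (h2e : ∀ t, κ2 (2*t) = κ2 t)
    (h2o : ∀ t, κ2 (2*t+1) = (κ2 t + κ2 (t+1))/2 + 1) :
    ∀ t : ℕ, 1 ≤ t → (blockCount t : ℚ) ≤ κ2 t := by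
  have hκ1 : κ2 1 = 2 := by linarith [h2o 0, h2z]
  suffices h : ∀ t, (blockCount t : ℚ) ≤ κ2 t from fun t _ => h t
  intro t
  induction t using Nat.strong_induction_on with
  | _ t ih =>
    obtain ⟨u, rfl | rfl⟩ := Nat.even_or_odd' t
    · rcases u.eq_zero_or_pos with rfl | hu
      · simp [h2z]
      · rw [blockCount_two_mul, h2e]
        exact ih u (by omega)
    · rcases u.eq_zero_or_pos with rfl | hu
      · simp [hκ1, blockCount_one]
      · have hcomb : (2 * blockCount (2 * u + 1) : ℚ) ≤
            blockCount u + blockCount (u + 1) + 2 :=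
          mod_cast two_mul_blockCount_two_mul_add_one_le u
        linarith [h2o u, ih u (by omega), ih (u + 1) (by omega)]
end

section
/- Define κ₃ : ℕ → ℚ by κ₃(0)=0, κ₃(2t)=κ₃(t), κ₃(2t+1)=(κ₃(t)+κ₃(t+1))/2 + (3/2)(κ₂(t)−κ₂(t+1)). Then for all t, |κ₃(t+1) − κ₃(t)| ≤ 6. -/
/-! Write `d t = f (t+1) - f t` for a function with `f (2t) = f t` and
`f (2t+1) = (f t + f (t+1))/2 + g t`. Then `d (2k) = d k / 2 + g k` and
`d (2k+1) = d k / 2 - g k`, so `|g| ≤ c` propagates `|d| ≤ 2c` from `k` to `2k` and `2k+1`;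
at `k = 0` the first identity reads `d 0 = 2 g 0`. Applied to `κ₂` with `g = 1` this gives
`|Δκ₂| ≤ 2`, hence `|(3/2) Δκ₂| ≤ 3`, and applied to `κ₃` it gives `|Δκ₃| ≤ 6`. -/

section DyadicRecurrence

variable {K : Type*} [Field K] [LinearOrder K] [IsStrictOrderedRing K] {f g : ℕ → K}

theorem dyadic_sub_two_mul (he : ∀ t, f (2 * t) = f t)
    (ho : ∀ t, f (2 * t + 1) = (f t + f (t + 1)) / 2 + g t) (k : ℕ) :
    f (2 * k + 1) - f (2 * k) = (f (k + 1) - f k) / 2 + g k := by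
  rw [ho, he]; ring

theorem dyadic_sub_two_mul_add_one (he : ∀ t, f (2 * t) = f t)
    (ho : ∀ t, f (2 * t + 1) = (f t + f (t + 1)) / 2 + g t) (k : ℕ) :
    f (2 * k + 1 + 1) - f (2 * k + 1) = (f (k + 1) - f k) / 2 - g k := by
  rw [show 2 * k + 1 + 1 = 2 * (k + 1) by ring, ho, he]; ring

theorem abs_sub_le_of_dyadic {c : K} (hg : ∀ t, |g t| ≤ c) (he : ∀ t, f (2 * t) = f t)
    (ho : ∀ t, f (2 * t + 1) = (f t + f (t + 1)) / 2 + g t) (t : ℕ) :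
    |f (t + 1) - f t| ≤ 2 * c := by
  induction t using Nat.strong_induction_on with
  | _ t ih =>
    obtain ⟨k, rfl | rfl⟩ := Nat.even_or_odd' t
    · rcases Nat.eq_zero_or_pos k with rfl | hk
      · have h0 := dyadic_sub_two_mul he ho 0
        rw [show f (2 * 0 + 1) - f (2 * 0) = 2 * g 0 by linarith, abs_mul, abs_two]
        linarith [hg 0]
      · have hd := ih k (by omega)
        rw [abs_le] at hd
        rw [dyadic_sub_two_mul he ho, abs_le]
        constructor <;> linarith [abs_le.mp (hg k)]
    · have hd := ih k (by omega)
      rw [abs_le] at hd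
      rw [dyadic_sub_two_mul_add_one he ho, abs_le]
      constructor <;> linarith [abs_le.mp (hg k)]

end DyadicRecurrence

theorem stmt_5_general (κ2 : ℕ → ℚ)
    (h2e : ∀ t, κ2 (2*t) = κ2 t)
    (h2o : ∀ t, κ2 (2*t+1) = (κ2 t + κ2 (t+1))/2 + 1) (κ3 : ℕ → ℚ)
    (h3e : ∀ t, κ3 (2*t) = κ3 t)
    (h3o : ∀ t, κ3 (2*t+1) = (κ3 t + κ3 (t+1))/2 + (3/2)*(κ2 t - κ2 (t+1))) : ∀ t : ℕ, |κ3 (t+1) - κ3 t| ≤ 6 := by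
  have hκ2 : ∀ t, |κ2 (t + 1) - κ2 t| ≤ 2 := by
    simpa using abs_sub_le_of_dyadic (g := fun _ => 1) (c := 1) (by simp) h2e h2o
  have hg : ∀ t, |(3 / 2 : ℚ) * (κ2 t - κ2 (t + 1))| ≤ 3 := fun t => by
    rw [abs_mul, abs_sub_comm]; norm_num; linarith [hκ2 t]
  intro t
  linarith [abs_sub_le_of_dyadic hg h3e h3o t]

theorem stmt_5 (κ2 : ℕ → ℚ) (h2z : κ2 0 = 0)
    (h2e : ∀ t, κ2 (2*t) = κ2 t)
    (h2o : ∀ t, κ2 (2*t+1) = (κ2 t + κ2 (t+1))/2 + 1) (κ3 : ℕ → ℚ) (h3z : κ3 0 = 0)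
    (h3e : ∀ t, κ3 (2*t) = κ3 t)
    (h3o : ∀ t, κ3 (2*t+1) = (κ3 t + κ3 (t+1))/2 + (3/2)*(κ2 t - κ2 (t+1))) : ∀ t : ℕ, |κ3 (t+1) - κ3 t| ≤ 6 :=
  stmt_5_general κ2 h2e h2o κ3 h3e h3o
end

section
/- Define κ₄ : ℕ → ℚ by κ₄(0)=0, κ₄(2t)=κ₄(t), κ₄(2t+1)=(κ₄(t)+κ₄(t+1))/2 + 2(κ₃(t)−κ₃(t+1)) + (3/4)(κ₂(t)−κ₂(t+1))² − 2. Then for all t, |κ₄(t+1) − κ₄(t)| ≤ 28. -/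
/-! Writing `Δf t = f (t+1) - f t`, the recursions give `Δf (2s) = Δf s / 2 + g s` and
`Δf (2s+1) = Δf s / 2 - g s`, where the forcing term `g` of `κⱼ` depends only on the increments
of the lower `κᵢ`. Hence the increments `(a, b, c)` of `(κ₂, κ₃, κ₄)` evolve along the binary
digits of `t` by two contracting affine-quadratic maps, which preserve the region
`|a| ≤ 2, -6 ≤ b ≤ 2, b + 3|a| ≤ 4, |c| ≤ 26`; at `t = 0` the increments are the fixed point
`(2, -6, 26)`. -/

section Dyadic

variable {K : Type*} [Field K] [CharZero K] {f g : ℕ → K}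

theorem dyadic_sub_even (he : ∀ t, f (2 * t) = f t)
    (ho : ∀ t, f (2 * t + 1) = (f t + f (t + 1)) / 2 + g t) (s : ℕ) :
    f (2 * s + 1) - f (2 * s) = (f (s + 1) - f s) / 2 + g s := by
  rw [ho, he]; ring

theorem dyadic_sub_odd (he : ∀ t, f (2 * t) = f t)
    (ho : ∀ t, f (2 * t + 1) = (f t + f (t + 1)) / 2 + g t) (s : ℕ) :
    f (2 * s + 1 + 1) - f (2 * s + 1) = (f (s + 1) - f s) / 2 - g s := by
  rw [show 2 * s + 1 + 1 = 2 * (s + 1) by ring, he, ho]; ring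

theorem dyadic_sub_zero (he : ∀ t, f (2 * t) = f t)
    (ho : ∀ t, f (2 * t + 1) = (f t + f (t + 1)) / 2 + g t) :
    f 1 - f 0 = 2 * g 0 := by
  have h := dyadic_sub_even he ho 0
  simp only [mul_zero, zero_add] at h
  linear_combination 2 * h

end Dyadic

section IncrementBound

variable {K : Type*} [Field K] [LinearOrder K] [IsStrictOrderedRing K]

def IncrementBound (a b c : K) : Prop :=
  |a| ≤ 2 ∧ -6 ≤ b ∧ b ≤ 2 ∧ b + 3 * |a| ≤ 4 ∧ |c| ≤ 26

theorem IncrementBound.step {a b c a' b' c' ε : K} (h : IncrementBound a b c)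
    (hε : ε = 1 ∨ ε = -1) (ha' : a' = a / 2 + ε) (hb' : b' = b / 2 - ε * (3 / 2) * a)
    (hc' : c' = c / 2 + ε * (3 / 4 * a ^ 2 - 2 * b - 2)) :
    IncrementBound a' b' c' := by
  obtain ⟨ha, hb₁, hb₂, hab, hc⟩ := h
  have hab₁ : b + 3 * a ≤ 4 := by linarith [le_abs_self a]
  have hab₂ : b - 3 * a ≤ 4 := by linarith [neg_abs_le a]
  rw [abs_le] at ha hc
  have hsq : a ^ 2 ≤ 4 := by nlinarith
  have hsq₀ : 0 ≤ a ^ 2 := sq_nonneg a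
  subst ha' hb' hc'
  refine ⟨abs_le.2 ⟨?_, ?_⟩, ?_, ?_, ?_, abs_le.2 ⟨?_, ?_⟩⟩ <;>
    rcases hε with rfl | rfl <;> try linarith
  all_goals rcases abs_cases (a / 2 + _) with ⟨habs, _⟩ | ⟨habs, _⟩ <;> rw [habs] <;> linarith

end IncrementBound

theorem stmt_6_general (κ2 : ℕ → ℚ)
    (h2e : ∀ t, κ2 (2*t) = κ2 t)
    (h2o : ∀ t, κ2 (2*t+1) = (κ2 t + κ2 (t+1))/2 + 1) (κ3 : ℕ → ℚ)
    (h3e : ∀ t, κ3 (2*t) = κ3 t)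
    (h3o : ∀ t, κ3 (2*t+1) = (κ3 t + κ3 (t+1))/2 + (3/2)*(κ2 t - κ2 (t+1))) (κ4 : ℕ → ℚ)
    (h4e : ∀ t, κ4 (2*t) = κ4 t)
    (h4o : ∀ t, κ4 (2*t+1) = (κ4 t + κ4 (t+1))/2 + 2*(κ3 t - κ3 (t+1))
        + (3/4)*(κ2 t - κ2 (t+1))^2 - 2) : ∀ t : ℕ, |κ4 (t+1) - κ4 t| ≤ 28 := by
  have h4o' : ∀ t, κ4 (2 * t + 1) = (κ4 t + κ4 (t + 1)) / 2
      + (2 * (κ3 t - κ3 (t + 1)) + 3 / 4 * (κ2 t - κ2 (t + 1)) ^ 2 - 2) := fun t => by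
    rw [h4o]; ring
  have hbound : ∀ t,
      IncrementBound (κ2 (t + 1) - κ2 t) (κ3 (t + 1) - κ3 t) (κ4 (t + 1) - κ4 t) := by
    intro t
    induction t using Nat.evenOddRec with
    | h0 =>
      have ha : κ2 1 - κ2 0 = 2 := by linear_combination dyadic_sub_zero h2e h2o
      have hb : κ3 1 - κ3 0 = -6 := by linear_combination dyadic_sub_zero h3e h3o - 3 * ha
      have hc : κ4 1 - κ4 0 = 26 := by
        linear_combination dyadic_sub_zero h4e h4o' - 4 * hb + 3 / 2 * (κ2 1 - κ2 0 + 2) * ha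
      rw [zero_add, ha, hb, hc]
      norm_num [IncrementBound]
    | h_even n ih =>
      exact ih.step (Or.inl rfl) (dyadic_sub_even h2e h2o n)
        (by linear_combination dyadic_sub_even h3e h3o n)
        (by linear_combination dyadic_sub_even h4e h4o' n)
    | h_odd n ih =>
      exact ih.step (Or.inr rfl) (by linear_combination dyadic_sub_odd h2e h2o n)
        (by linear_combination dyadic_sub_odd h3e h3o n)
        (by linear_combination dyadic_sub_odd h4e h4o' n)
  exact fun t => (hbound t).2.2.2.2.trans (by norm_num)

theorem stmt_6 (κ2 : ℕ → ℚ) (h2z : κ2 0 = 0)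
    (h2e : ∀ t, κ2 (2*t) = κ2 t)
    (h2o : ∀ t, κ2 (2*t+1) = (κ2 t + κ2 (t+1))/2 + 1) (κ3 : ℕ → ℚ) (h3z : κ3 0 = 0)
    (h3e : ∀ t, κ3 (2*t) = κ3 t)
    (h3o : ∀ t, κ3 (2*t+1) = (κ3 t + κ3 (t+1))/2 + (3/2)*(κ2 t - κ2 (t+1))) (κ4 : ℕ → ℚ) (h4z : κ4 0 = 0)
    (h4e : ∀ t, κ4 (2*t) = κ4 t)
    (h4o : ∀ t, κ4 (2*t+1) = (κ4 t + κ4 (t+1))/2 + 2*(κ3 t - κ3 (t+1))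
        + (3/4)*(κ2 t - κ2 (t+1))^2 - 2) : ∀ t : ℕ, |κ4 (t+1) - κ4 t| ≤ 28 :=
  stmt_6_general κ2 h2e h2o κ3 h3e h3o κ4 h4e h4o
end

section
/- Define κ₅ : ℕ → ℚ by κ₅(0)=0, κ₅(2t)=κ₅(t), κ₅(2t+1)=(κ₅(t)+κ₅(t+1))/2 + (5/2)(κ₄(t)−κ₄(t+1)) + (5/2)(κ₂(t)−κ₂(t+1))(κ₃(t)−κ₃(t+1)) − 10(κ₂(t)−κ₂(t+1)). Then for all t, |κ₅(t+1) − κ₅(t)| ≤ 240. -/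
/-!
Write `v t = (Δκ₂, Δκ₃, Δκ₄, Δκ₅)(t)` for the forward differences `κⱼ (t+1) - κⱼ t`. Since
`κⱼ (2t) = κⱼ t`, the recursions say `v t = F_s (v ⌊t/2⌋)` with `s = (-1)^t`, for an explicit
map `F_s`. In particular `v 0` is the fixed point `(2, -6, 26, -150)` of `F_1`.
The box `|x| ≤ 2`, `0 ≤ y + 3/2 x² ≤ 3`, `|z| ≤ 26`, `|w| ≤ 240` contains this fixed point and is
mapped into itself by `F_{±1}`, so every `v t` lies in it.
-/

open Function

namespace KappaDiff

variable {K : Type*}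

theorem apply_succ_sub_apply [Field K] [CharZero K] {f : ℕ → K} (he : ∀ t, f (2 * t) = f t) (t : ℕ) :
    f (t + 1) - f t = (f (t / 2 + 1) - f (t / 2)) / 2
      + (-1) ^ t * (f (2 * (t / 2) + 1) - (f (t / 2) + f (t / 2 + 1)) / 2) := by
  obtain ⟨u, rfl | rfl⟩ := Nat.even_or_odd' t
  · have hu : 2 * u / 2 = u := by omega
    rw [hu, he, pow_mul]
    field_simp
    ring
  · have hu : (2 * u + 1) / 2 = u := by omega
    rw [hu, show 2 * u + 1 + 1 = 2 * (u + 1) by ring, he, pow_succ, pow_mul]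
    field_simp
    ring

section Field

variable [Field K]

def step (s : K) : K × K × K × K → K × K × K × K
  | (x, y, z, w) =>
    (x / 2 + s, y / 2 + s * (-(3 / 2) * x), z / 2 + s * (-2 * y + 3 / 4 * x ^ 2 - 2),
      w / 2 + s * (-(5 / 2) * z + 5 / 2 * (x * y) + 10 * x))

theorem eq_of_isFixedPt_step_one [CharZero K] {v : K × K × K × K} (hv : IsFixedPt (step 1) v) :
    v = (2, -6, 26, -150) := by
  obtain ⟨x, y, z, w⟩ := v
  simp only [IsFixedPt, step, one_mul, Prod.mk.injEq] at hv
  obtain ⟨hx, hy, hz, hw⟩ := hv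
  obtain rfl : x = 2 := by linear_combination -2 * hx
  obtain rfl : y = -6 := by linear_combination -2 * hy
  obtain rfl : z = 26 := by linear_combination -2 * hz
  obtain rfl : w = -150 := by linear_combination -2 * hw
  rfl

end Field

section Ordered

variable [Field K] [LinearOrder K] [IsStrictOrderedRing K]

theorem abs_half_add_mul_le {s : K} (hs : |s| = 1) (a b : K) : |a / 2 + s * b| ≤ |a| / 2 + |b| := by
  simpa [abs_div, abs_mul, hs] using abs_add_le (a / 2) (s * b)

/-- The second coordinate is controlled through `y + 3/2 x²`, which `step s` maps to
`(y + 3/2 x²)/2 - 3/8 x² + 3/2`, rather than through `|y|`. -/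
def Bounds : K × K × K × K → Prop
  | (x, y, z, w) => |x| ≤ 2 ∧ 0 ≤ y + 3 / 2 * x ^ 2 ∧ y + 3 / 2 * x ^ 2 ≤ 3 ∧ |z| ≤ 26 ∧ |w| ≤ 240

theorem Bounds.step {s : K} (hs : |s| = 1) {v : K × K × K × K} (hv : Bounds v) :
    Bounds (step s v) := by
  obtain ⟨x, y, z, w⟩ := v
  obtain ⟨hx, hq₀, hq₃, hz, hw⟩ := hv
  have hs2 : s ^ 2 = 1 := by rw [← sq_abs, hs, one_pow]
  have hx2 : x ^ 2 ≤ 4 := by nlinarith [abs_nonneg x, sq_abs x]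
  have hy : |y| ≤ 6 := abs_le.2 ⟨by nlinarith, by nlinarith [sq_nonneg x]⟩
  have hxy : |x * y| ≤ 12 := by
    rw [abs_mul]; nlinarith [abs_nonneg x, abs_nonneg y]
  have hq' : y / 2 + s * (-(3 / 2) * x) + 3 / 2 * (x / 2 + s) ^ 2
      = (y + 3 / 2 * x ^ 2) / 2 - 3 / 8 * x ^ 2 + 3 / 2 := by
    linear_combination 3 / 2 * hs2
  have hzInc : |-2 * y + 3 / 4 * x ^ 2 - 2| ≤ 13 :=
    abs_le.2 ⟨by nlinarith [sq_nonneg x], by nlinarith⟩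
  have hwInc : |-(5 / 2) * z + 5 / 2 * (x * y) + 10 * x| ≤ 115 := by
    rw [abs_le] at hx hz hxy ⊢
    constructor <;> linarith
  refine ⟨?_, ?_, ?_, ?_, ?_⟩
  · simpa using (abs_half_add_mul_le hs x 1).trans (by linarith)
  · rw [hq']; linarith
  · rw [hq']; linarith [sq_nonneg x]
  · exact (abs_half_add_mul_le hs z _).trans (by linarith)
  · exact (abs_half_add_mul_le hs w _).trans (by linarith)

theorem bounds_of_eq_step {v : ℕ → K × K × K × K} (hv : ∀ t, v t = step ((-1) ^ t) (v (t / 2)))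
    (t : ℕ) : Bounds (v t) := by
  induction t using Nat.strong_induction_on with
  | _ t ih =>
    rcases t.eq_zero_or_pos with rfl | ht
    · have hfix : IsFixedPt (step 1) (v 0) := (by simpa using hv 0 : v 0 = step 1 (v 0)).symm
      rw [eq_of_isFixedPt_step_one hfix]
      norm_num [Bounds]
    · rw [hv t]
      exact (ih _ (Nat.div_lt_self ht one_lt_two)).step (by simp)

end Ordered

end KappaDiff

theorem stmt_7_general (κ2 : ℕ → ℚ)
    (h2e : ∀ t, κ2 (2*t) = κ2 t)
    (h2o : ∀ t, κ2 (2*t+1) = (κ2 t + κ2 (t+1))/2 + 1) (κ3 : ℕ → ℚ)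
    (h3e : ∀ t, κ3 (2*t) = κ3 t)
    (h3o : ∀ t, κ3 (2*t+1) = (κ3 t + κ3 (t+1))/2 + (3/2)*(κ2 t - κ2 (t+1))) (κ4 : ℕ → ℚ)
    (h4e : ∀ t, κ4 (2*t) = κ4 t)
    (h4o : ∀ t, κ4 (2*t+1) = (κ4 t + κ4 (t+1))/2 + 2*(κ3 t - κ3 (t+1))
        + (3/4)*(κ2 t - κ2 (t+1))^2 - 2) (κ5 : ℕ → ℚ)
    (h5e : ∀ t, κ5 (2*t) = κ5 t)
    (h5o : ∀ t, κ5 (2*t+1) = (κ5 t + κ5 (t+1))/2 + (5/2)*(κ4 t - κ4 (t+1))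
        + (5/2)*(κ2 t - κ2 (t+1))*(κ3 t - κ3 (t+1)) - 10*(κ2 t - κ2 (t+1))) : ∀ t : ℕ, |κ5 (t+1) - κ5 t| ≤ 240 := by
  intro t
  refine (KappaDiff.bounds_of_eq_step (v := fun t =>
    (κ2 (t+1) - κ2 t, κ3 (t+1) - κ3 t, κ4 (t+1) - κ4 t, κ5 (t+1) - κ5 t)) (fun t => ?_) t).2.2.2.2
  simp only [KappaDiff.step, Prod.mk.injEq]
  refine ⟨?_, ?_, ?_, ?_⟩
  · rw [KappaDiff.apply_succ_sub_apply h2e t, h2o]; ring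
  · rw [KappaDiff.apply_succ_sub_apply h3e t, h3o]; ring
  · rw [KappaDiff.apply_succ_sub_apply h4e t, h4o]; ring
  · rw [KappaDiff.apply_succ_sub_apply h5e t, h5o]; ring

theorem stmt_7 (κ2 : ℕ → ℚ) (h2z : κ2 0 = 0)
    (h2e : ∀ t, κ2 (2*t) = κ2 t)
    (h2o : ∀ t, κ2 (2*t+1) = (κ2 t + κ2 (t+1))/2 + 1) (κ3 : ℕ → ℚ) (h3z : κ3 0 = 0)
    (h3e : ∀ t, κ3 (2*t) = κ3 t)
    (h3o : ∀ t, κ3 (2*t+1) = (κ3 t + κ3 (t+1))/2 + (3/2)*(κ2 t - κ2 (t+1))) (κ4 : ℕ → ℚ) (h4z : κ4 0 = 0)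
    (h4e : ∀ t, κ4 (2*t) = κ4 t)
    (h4o : ∀ t, κ4 (2*t+1) = (κ4 t + κ4 (t+1))/2 + 2*(κ3 t - κ3 (t+1))
        + (3/4)*(κ2 t - κ2 (t+1))^2 - 2) (κ5 : ℕ → ℚ) (h5z : κ5 0 = 0)
    (h5e : ∀ t, κ5 (2*t) = κ5 t)
    (h5o : ∀ t, κ5 (2*t+1) = (κ5 t + κ5 (t+1))/2 + (5/2)*(κ4 t - κ4 (t+1))
        + (5/2)*(κ2 t - κ2 (t+1))*(κ3 t - κ3 (t+1)) - 10*(κ2 t - κ2 (t+1))) : ∀ t : ℕ, |κ5 (t+1) - κ5 t| ≤ 240 :=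
  stmt_7_general κ2 h2e h2o κ3 h3e h3o κ4 h4e h4o κ5 h5e h5o
end

section
/- Define D(t)=κ₂(t)−κ₃(t)/3. Then D(t) ≥ 4 for all t ≥ 1. -/
/-!
Writing `D t = κ₂ t - κ₃ t / 3`, the recurrences give `D (2t) = D t` and
`D (2t+1) = (D t + D (t+1)) / 2 + (κ₂ (t+1) - κ₂ t) / 2 + 1`. Since consecutive values of `κ₂`
differ by at most `2`, the odd step never drops below the average of its two parents, so the
value `D 1 = 4` propagates to every `t ≥ 1` by strong induction.
-/

variable {α : Type*} [Field α] [LinearOrder α] [IsStrictOrderedRing α]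

theorem le_of_le_one_of_two_mul {g : ℕ → α} {c : α} (h1 : c ≤ g 1)
    (heven : ∀ t, g (2 * t) = g t) (hodd : ∀ t, (g t + g (t + 1)) / 2 ≤ g (2 * t + 1)) :
    ∀ t, 1 ≤ t → c ≤ g t := by
  intro t
  induction t using Nat.strong_induction_on with
  | _ t ih =>
    intro ht
    obtain ⟨s, rfl | rfl⟩ := Nat.even_or_odd' t
    · rw [heven]
      exact ih s (by omega) (by omega)
    · rcases Nat.eq_zero_or_pos s with rfl | hs
      · exact h1
      · have hs₀ := ih s (by omega) hs
        have hs₁ := ih (s + 1) (by omega) (by omega)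
        linarith [hodd s]

theorem abs_sub_le_two_of_two_mul {κ : ℕ → α} (he : ∀ t, κ (2 * t) = κ t)
    (ho : ∀ t, κ (2 * t + 1) = (κ t + κ (t + 1)) / 2 + 1) (t : ℕ) :
    |κ (t + 1) - κ t| ≤ 2 := by
  induction t using Nat.strong_induction_on with
  | _ t ih =>
    obtain ⟨s, rfl | rfl⟩ := Nat.even_or_odd' t
    · rcases Nat.eq_zero_or_pos s with rfl | hs
      · have h := ho 0
        simp only [mul_zero, zero_add] at h ⊢
        rw [abs_le]
        constructor <;> linarith
      · have h := abs_le.mp (ih s (by omega))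
        rw [ho, he, abs_le]
        constructor <;> linarith
    · have h := abs_le.mp (ih s (by omega))
      rw [show 2 * s + 1 + 1 = 2 * (s + 1) by ring, he, ho, abs_le]
      constructor <;> linarith

theorem stmt_11 (κ2 : ℕ → ℚ) (h2z : κ2 0 = 0)
    (h2e : ∀ t, κ2 (2*t) = κ2 t)
    (h2o : ∀ t, κ2 (2*t+1) = (κ2 t + κ2 (t+1))/2 + 1) (κ3 : ℕ → ℚ) (h3z : κ3 0 = 0)
    (h3e : ∀ t, κ3 (2*t) = κ3 t)
    (h3o : ∀ t, κ3 (2*t+1) = (κ3 t + κ3 (t+1))/2 + (3/2)*(κ2 t - κ2 (t+1))) :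
    ∀ t : ℕ, 1 ≤ t → 4 ≤ κ2 t - κ3 t / 3 := by
  apply le_of_le_one_of_two_mul (g := fun t ↦ κ2 t - κ3 t / 3)
  · have h2 := h2o 0
    have h3 := h3o 0
    simp only [mul_zero, zero_add, h2z, h3z] at h2 h3 ⊢
    linarith
  · intro t
    simp only [h2e, h3e]
  · intro t
    have hstep := abs_le.mp (abs_sub_le_two_of_two_mul h2e h2o t)
    simp only [h2o, h3o]
    linarith
end

section
/- For all t ≥ 0 and k ≥ 0, κ₂(2^{k+1}·t + 2^k − 1) = ((2^k+1)/2^{k+1})·κ₂(t) + ((2^k−1)/2^{k+1})·κ₂(t+1) + 3(2^k−1)/2^k. -/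
/-!
Put `m k = 2^(k+1) t + 2^k - 1`. Then `m (k+1) = 2 m k + 1` and `m k + 1 = 2^k (2t+1)`, so the odd
rule gives `κ₂(m (k+1)) = (κ₂(m k) + κ₂(2t+1))/2 + 1`, while `κ₂(2t+1) = (κ₂ t + κ₂(t+1))/2 + 1` since
`κ₂` is invariant under doubling. The closed form follows by induction on `k`.
-/

lemma apply_two_pow_mul_of_apply_two_mul {α : Type*} {f : ℕ → α} (hf : ∀ t, f (2 * t) = f t)
    (k n : ℕ) : f (2 ^ k * n) = f n := by
  induction k with
  | zero => simp
  | succ k ih => rw [pow_succ', mul_assoc, hf, ih]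

lemma two_pow_succ_mul_add_two_pow_sub_one_add_one (t k : ℕ) :
    2 ^ (k + 1) * t + 2 ^ k - 1 + 1 = 2 ^ k * (2 * t + 1) := by
  have : 1 ≤ 2 ^ k := Nat.one_le_two_pow
  rw [pow_succ]
  lia

lemma two_pow_succ_mul_add_two_pow_sub_one_succ (t k : ℕ) :
    2 ^ (k + 1 + 1) * t + 2 ^ (k + 1) - 1 = 2 * (2 ^ (k + 1) * t + 2 ^ k - 1) + 1 := by
  have : 1 ≤ 2 ^ k := Nat.one_le_two_pow
  rw [pow_succ _ (k + 1), pow_succ]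
  lia

theorem stmt_12_general (κ2 : ℕ → ℚ)
    (h2e : ∀ t, κ2 (2*t) = κ2 t)
    (h2o : ∀ t, κ2 (2*t+1) = (κ2 t + κ2 (t+1))/2 + 1) :
    ∀ t k : ℕ,
      κ2 (2^(k+1)*t + 2^k - 1)
        = ((2^k+1)/2^(k+1)) * κ2 t + (((2:ℚ)^k-1)/2^(k+1)) * κ2 (t+1)
          + 3*((2:ℚ)^k-1)/2^k := by
  intro t k
  induction k with
  | zero => norm_num [h2e]
  | succ k ih =>
    have h_next : κ2 (2 ^ (k + 1 + 1) * t + 2 ^ (k + 1) - 1)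
        = (κ2 (2 ^ (k + 1) * t + 2 ^ k - 1) + κ2 (2 * t + 1)) / 2 + 1 := by
      rw [two_pow_succ_mul_add_two_pow_sub_one_succ, h2o,
        two_pow_succ_mul_add_two_pow_sub_one_add_one, apply_two_pow_mul_of_apply_two_mul h2e]
    rw [h_next, ih, h2o]
    field_simp
    ring

theorem stmt_12 (κ2 : ℕ → ℚ) (h2z : κ2 0 = 0)
    (h2e : ∀ t, κ2 (2*t) = κ2 t)
    (h2o : ∀ t, κ2 (2*t+1) = (κ2 t + κ2 (t+1))/2 + 1) :
    ∀ t k : ℕ,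
      κ2 (2^(k+1)*t + 2^k - 1)
        = ((2^k+1)/2^(k+1)) * κ2 t + (((2:ℚ)^k-1)/2^(k+1)) * κ2 (t+1)
          + 3*((2:ℚ)^k-1)/2^k :=
  stmt_12_general κ2 h2e h2o
end

section
/- For all t ≥ 0 and k ≥ 0, with D(t)=κ₂(t)−κ₃(t)/3, one has D(2^{k+1}t+2^k−1) = ((2^k+1)/2^{k+1})D(t) + ((2^k−1)/2^{k+1})D(t+1) + (1/2 + (k−1)/2^{k+1})(κ₂(t+1)−κ₂(t)) + 1 + (3k−1)/2^k. -/
/-!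
Write `n_k = zeroOnes t k = 2^(k+1) t + 2^k - 1`, whose binary expansion is that of `t` followed by a `0` and `k`
ones. Stripping the last one gives `n_{k+1} = 2 n_k + 1`, while `n_k + 1 = 2^k (2t + 1)`, on which
`κⱼ` takes the value `κⱼ(2t + 1)`. So the odd recursions turn `κ₂(n_k)` and `κ₃(n_k)` into
first-order affine recurrences in `k`, whose closed forms are proved by induction; `D` is then a
linear combination of them.
-/

def zeroOnes (t k : ℕ) : ℕ := 2^(k+1)*t + 2^k - 1

lemma zeroOnes_zero (t : ℕ) : zeroOnes t 0 = 2*t := by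
  simp [zeroOnes]

lemma zeroOnes_add_one (t k : ℕ) : zeroOnes t k + 1 = 2^k * (2*t+1) := by
  have := Nat.one_le_two_pow (n := k)
  unfold zeroOnes
  rw [Nat.sub_add_cancel (by omega)]
  ring

lemma zeroOnes_succ (t k : ℕ) : zeroOnes t (k+1) = 2 * zeroOnes t k + 1 := by
  have h := zeroOnes_add_one t (k+1)
  rw [pow_succ, mul_comm _ 2, mul_assoc, ← zeroOnes_add_one] at h
  omega

section DyadicRecursion

variable {f g : ℕ → ℚ} (he : ∀ t, f (2*t) = f t)
include he

lemma apply_two_pow_mul (k n : ℕ) : f (2^k * n) = f n := by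
  induction k with
  | zero => simp
  | succ k ih => rw [pow_succ, mul_comm _ 2, mul_assoc, he, ih]

lemma apply_zeroOnes_add_one (t k : ℕ) : f (zeroOnes t k + 1) = f (2*t+1) := by
  rw [zeroOnes_add_one, apply_two_pow_mul he]

lemma apply_zeroOnes_succ (ho : ∀ t, f (2*t+1) = (f t + f (t+1))/2 + g t) (t k : ℕ) :
    f (zeroOnes t (k+1)) = (f (zeroOnes t k) + f (2*t+1))/2 + g (zeroOnes t k) := by
  rw [zeroOnes_succ, ho, apply_zeroOnes_add_one he]

end DyadicRecursion

section Kappa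

variable {κ2 κ3 : ℕ → ℚ} (h2e : ∀ t, κ2 (2*t) = κ2 t)
  (h2o : ∀ t, κ2 (2*t+1) = (κ2 t + κ2 (t+1))/2 + 1)

include h2e h2o in
lemma kappa2_zeroOnes (t k : ℕ) :
    κ2 (zeroOnes t k)
      = (1/2 + 1/2^(k+1)) * κ2 t + (1/2 - 1/2^(k+1)) * κ2 (t+1) + 3 - 3/2^k := by
  induction k with
  | zero => rw [zeroOnes_zero, h2e]; ring
  | succ k ih =>
    rw [apply_zeroOnes_succ (g := fun _ => 1) h2e h2o, ih, h2o]
    field_simp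
    ring

include h2e h2o in
lemma kappa3_zeroOnes (h3e : ∀ t, κ3 (2*t) = κ3 t)
    (h3o : ∀ t, κ3 (2*t+1) = (κ3 t + κ3 (t+1))/2 + (3/2)*(κ2 t - κ2 (t+1))) (t k : ℕ) :
    κ3 (zeroOnes t k)
      = (1/2 + 1/2^(k+1)) * κ3 t + (1/2 - 1/2^(k+1)) * κ3 (t+1)
        + (3/2 + 3*((k:ℚ)-1)/2^(k+1)) * (κ2 t - κ2 (t+1)) + 6 - 6/2^k - 9*(k:ℚ)/2^k := by
  induction k with
  | zero => rw [zeroOnes_zero, h3e]; push_cast; ring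
  | succ k ih =>
    rw [apply_zeroOnes_succ h3e h3o, ih, h3o, apply_zeroOnes_add_one h2e,
      kappa2_zeroOnes h2e h2o, h2o]
    push_cast
    field_simp
    ring

end Kappa

theorem stmt_13_general (κ2 : ℕ → ℚ)
    (h2e : ∀ t, κ2 (2*t) = κ2 t)
    (h2o : ∀ t, κ2 (2*t+1) = (κ2 t + κ2 (t+1))/2 + 1) (κ3 : ℕ → ℚ)
    (h3e : ∀ t, κ3 (2*t) = κ3 t)
    (h3o : ∀ t, κ3 (2*t+1) = (κ3 t + κ3 (t+1))/2 + (3/2)*(κ2 t - κ2 (t+1))) :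
    ∀ t k : ℕ,
      κ2 (2^(k+1)*t + 2^k - 1) - κ3 (2^(k+1)*t + 2^k - 1) / 3
        = ((2^k+1)/2^(k+1)) * (κ2 t - κ3 t / 3)
          + (((2:ℚ)^k-1)/2^(k+1)) * (κ2 (t+1) - κ3 (t+1) / 3)
          + (1/2 + ((k:ℚ)-1)/2^(k+1)) * (κ2 (t+1) - κ2 t)
          + 1 + (3*(k:ℚ)-1)/2^k := by
  intro t k
  rw [← zeroOnes, kappa2_zeroOnes h2e h2o, kappa3_zeroOnes h2e h2o h3e h3o]
  field_simp
  ring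

theorem stmt_13 (κ2 : ℕ → ℚ) (h2z : κ2 0 = 0)
    (h2e : ∀ t, κ2 (2*t) = κ2 t)
    (h2o : ∀ t, κ2 (2*t+1) = (κ2 t + κ2 (t+1))/2 + 1) (κ3 : ℕ → ℚ) (h3z : κ3 0 = 0)
    (h3e : ∀ t, κ3 (2*t) = κ3 t)
    (h3o : ∀ t, κ3 (2*t+1) = (κ3 t + κ3 (t+1))/2 + (3/2)*(κ2 t - κ2 (t+1))) :
    ∀ t k : ℕ,
      κ2 (2^(k+1)*t + 2^k - 1) - κ3 (2^(k+1)*t + 2^k - 1) / 3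
        = ((2^k+1)/2^(k+1)) * (κ2 t - κ3 t / 3)
          + (((2:ℚ)^k-1)/2^(k+1)) * (κ2 (t+1) - κ3 (t+1) / 3)
          + (1/2 + ((k:ℚ)-1)/2^(k+1)) * (κ2 (t+1) - κ2 t)
          + 1 + (3*(k:ℚ)-1)/2^k :=
  stmt_13_general κ2 h2e h2o κ3 h3e h3o
end

section
/- For all t ≥ 0 and k ≥ 1, D(2^{k+1}t+2^k−1) ≥ min(D(t), D(t+1)) + k/2^{k−1}, where D(t)=κ₂(t)−κ₃(t)/3. -/
/-!
Along the chain `nₖ = 2^k (2t+1) - 1` we have `nₖ₊₁ = 2 nₖ + 1` and `nₖ + 1 = 2^k (2t+1)`, so the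
odd-index recurrences become affine recurrences with a fixed inhomogeneous term. The gap
`κ₂(2t+1) + 2 - κ₂(nₖ)` halves at each step, so `2^k (D(nₖ) - D(2t+1))` grows by the initial gap
`e = (κ₂(t+1) - κ₂(t))/2 + 3` at each step. Since `κ₂(t+1) - κ₂(t) ≥ -2` we get `e ≥ 2` and
`D(2t+1) ≥ min (D t) (D (t+1)) + e - 2 ≥ min (D t) (D (t+1))`, which gives the bound.
-/

namespace Kappa

variable {κ2 κ3 : ℕ → ℚ}

theorem apply_two_pow_mul {α : Type*} {f : ℕ → α} (hf : ∀ t, f (2 * t) = f t) (j s : ℕ) :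
    f (2 ^ j * s) = f s := by
  induction j with
  | zero => simp
  | succ j ih => rw [pow_succ, mul_comm (2 ^ j) 2, mul_assoc, hf, ih]

theorem neg_two_le_sub (h2e : ∀ t, κ2 (2 * t) = κ2 t)
    (h2o : ∀ t, κ2 (2 * t + 1) = (κ2 t + κ2 (t + 1)) / 2 + 1) (t : ℕ) :
    -2 ≤ κ2 (t + 1) - κ2 t := by
  induction t using Nat.evenOddRec with
  | h0 => have h := h2o 0; norm_num at h ⊢; linarith
  | h_even n ih => rw [h2o, h2e]; linarith
  | h_odd n ih => rw [show 2 * n + 1 + 1 = 2 * (n + 1) by ring, h2e, h2o]; linarith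

def D (κ2 κ3 : ℕ → ℚ) (t : ℕ) : ℚ := κ2 t - κ3 t / 3

theorem D_two_pow_mul (h2e : ∀ t, κ2 (2 * t) = κ2 t) (h3e : ∀ t, κ3 (2 * t) = κ3 t)
    (j s : ℕ) : D κ2 κ3 (2 ^ j * s) = D κ2 κ3 s := by
  simp only [D, apply_two_pow_mul h2e, apply_two_pow_mul h3e]

theorem D_two_mul_add_one (h2o : ∀ t, κ2 (2 * t + 1) = (κ2 t + κ2 (t + 1)) / 2 + 1)
    (h3o : ∀ t, κ3 (2 * t + 1) = (κ3 t + κ3 (t + 1)) / 2 + (3 / 2) * (κ2 t - κ2 (t + 1)))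
    (s : ℕ) :
    D κ2 κ3 (2 * s + 1) = (D κ2 κ3 s + D κ2 κ3 (s + 1)) / 2 + 1 + (κ2 (s + 1) - κ2 s) / 2 := by
  simp only [D]
  rw [h2o, h3o]
  ring

theorem one_le_two_pow_mul {m : ℕ} (hm : 1 ≤ m) (k : ℕ) : 1 ≤ 2 ^ k * m :=
  Nat.mul_pos (by positivity) hm

theorem two_pow_succ_mul_sub_one {m : ℕ} (hm : 1 ≤ m) (k : ℕ) :
    2 ^ (k + 1) * m - 1 = 2 * (2 ^ k * m - 1) + 1 := by
  have := one_le_two_pow_mul hm k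
  rw [pow_succ, mul_comm _ 2, mul_assoc]
  omega

theorem two_pow_mul_gap_kappa2 (h2e : ∀ t, κ2 (2 * t) = κ2 t)
    (h2o : ∀ t, κ2 (2 * t + 1) = (κ2 t + κ2 (t + 1)) / 2 + 1) {m : ℕ} (hm : 1 ≤ m) (k : ℕ) :
    2 ^ k * (κ2 m + 2 - κ2 (2 ^ k * m - 1)) = κ2 m + 2 - κ2 (m - 1) := by
  induction k with
  | zero => simp
  | succ k ih =>
    rw [two_pow_succ_mul_sub_one hm, h2o, Nat.sub_add_cancel (one_le_two_pow_mul hm k),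
      apply_two_pow_mul h2e, ← ih]
    ring

theorem two_pow_mul_D_sub (h2e : ∀ t, κ2 (2 * t) = κ2 t)
    (h2o : ∀ t, κ2 (2 * t + 1) = (κ2 t + κ2 (t + 1)) / 2 + 1) (h3e : ∀ t, κ3 (2 * t) = κ3 t)
    (h3o : ∀ t, κ3 (2 * t + 1) = (κ3 t + κ3 (t + 1)) / 2 + (3 / 2) * (κ2 t - κ2 (t + 1)))
    {m : ℕ} (hm : 1 ≤ m) (k : ℕ) :
    2 ^ k * (D κ2 κ3 (2 ^ k * m - 1) - D κ2 κ3 m)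
      = D κ2 κ3 (m - 1) - D κ2 κ3 m + k * (κ2 m + 2 - κ2 (m - 1)) := by
  induction k with
  | zero => simp
  | succ k ih =>
    rw [two_pow_succ_mul_sub_one hm, D_two_mul_add_one h2o h3o,
      Nat.sub_add_cancel (one_le_two_pow_mul hm k), D_two_pow_mul h2e h3e, apply_two_pow_mul h2e]
    push_cast
    linear_combination ih + two_pow_mul_gap_kappa2 h2e h2o hm k

theorem min_add_le_D (h2e : ∀ t, κ2 (2 * t) = κ2 t)
    (h2o : ∀ t, κ2 (2 * t + 1) = (κ2 t + κ2 (t + 1)) / 2 + 1) (h3e : ∀ t, κ3 (2 * t) = κ3 t)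
    (h3o : ∀ t, κ3 (2 * t + 1) = (κ3 t + κ3 (t + 1)) / 2 + (3 / 2) * (κ2 t - κ2 (t + 1)))
    (t k : ℕ) :
    min (D κ2 κ3 t) (D κ2 κ3 (t + 1)) + 2 * k / 2 ^ k ≤ D κ2 κ3 (2 ^ k * (2 * t + 1) - 1) := by
  set μ := min (D κ2 κ3 t) (D κ2 κ3 (t + 1))
  have hchain := two_pow_mul_D_sub h2e h2o h3e h3o (m := 2 * t + 1) (by omega) k
  rw [Nat.add_sub_cancel, h2o, h2e, D_two_mul_add_one h2o h3o,
    show D κ2 κ3 (2 * t) = D κ2 κ3 t from D_two_pow_mul h2e h3e 1 t] at hchain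
  have hgap := neg_two_le_sub h2e h2o t
  have hμ : μ ≤ D κ2 κ3 t := min_le_left _ _
  have hμ' : μ ≤ D κ2 κ3 (t + 1) := min_le_right _ _
  have hpow : (1 : ℚ) ≤ 2 ^ k := one_le_pow₀ (by norm_num)
  have hB : 0 ≤ ((2 : ℚ) ^ k - 1) * ((D κ2 κ3 t + D κ2 κ3 (t + 1)) / 2 + 1
      + (κ2 (t + 1) - κ2 t) / 2 - μ) := mul_nonneg (by linarith) (by linarith)
  have hk : 0 ≤ (k : ℚ) * ((κ2 (t + 1) - κ2 t) / 2 + 1) :=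
    mul_nonneg (Nat.cast_nonneg k) (by linarith)
  rw [← mul_le_mul_iff_of_pos_left (by positivity : (0 : ℚ) < 2 ^ k), mul_add,
    mul_div_cancel₀ _ (by positivity)]
  linarith

end Kappa

theorem stmt_14_general (κ2 : ℕ → ℚ)
    (h2e : ∀ t, κ2 (2*t) = κ2 t)
    (h2o : ∀ t, κ2 (2*t+1) = (κ2 t + κ2 (t+1))/2 + 1) (κ3 : ℕ → ℚ)
    (h3e : ∀ t, κ3 (2*t) = κ3 t)
    (h3o : ∀ t, κ3 (2*t+1) = (κ3 t + κ3 (t+1))/2 + (3/2)*(κ2 t - κ2 (t+1))) :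
    ∀ t k : ℕ, 1 ≤ k →
      min (κ2 t - κ3 t / 3) (κ2 (t+1) - κ3 (t+1) / 3) + (k:ℚ)/2^(k-1)
        ≤ κ2 (2^(k+1)*t + 2^k - 1) - κ3 (2^(k+1)*t + 2^k - 1) / 3 := by
  intro t k hk
  have hidx : 2 ^ (k + 1) * t + 2 ^ k - 1 = 2 ^ k * (2 * t + 1) - 1 := by ring_nf
  have hcoef : (k : ℚ) / 2 ^ (k - 1) = 2 * k / 2 ^ k := by
    obtain ⟨j, rfl⟩ := Nat.exists_eq_add_of_le' hk
    rw [Nat.add_sub_cancel, pow_succ]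
    field_simp
  rw [hidx, hcoef]
  exact Kappa.min_add_le_D h2e h2o h3e h3o t k

theorem stmt_14 (κ2 : ℕ → ℚ) (h2z : κ2 0 = 0)
    (h2e : ∀ t, κ2 (2*t) = κ2 t)
    (h2o : ∀ t, κ2 (2*t+1) = (κ2 t + κ2 (t+1))/2 + 1) (κ3 : ℕ → ℚ) (h3z : κ3 0 = 0)
    (h3e : ∀ t, κ3 (2*t) = κ3 t)
    (h3o : ∀ t, κ3 (2*t+1) = (κ3 t + κ3 (t+1))/2 + (3/2)*(κ2 t - κ2 (t+1))) :
    ∀ t k : ℕ, 1 ≤ k →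
      min (κ2 t - κ3 t / 3) (κ2 (t+1) - κ3 (t+1) / 3) + (k:ℚ)/2^(k-1)
        ≤ κ2 (2^(k+1)*t + 2^k - 1) - κ3 (2^(k+1)*t + 2^k - 1) / 3 :=
  stmt_14_general κ2 h2e h2o κ3 h3e h3o
end

section
/- Define m(t)=min(D(t),D(t+1)) with D(t)=κ₂(t)−κ₃(t)/3. Then for all t, min(m(2t), m(2t+1)) ≥ m(t). -/
/-!
Writing `D t = κ₂ t - κ₃ t / 3`, the recursions give `D (2t) = D t` and
`D (2t+1) = (D t + D (t+1)) / 2 + (κ₂ (t+1) - κ₂ t) / 2 + 1`. The difference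
`δ t = κ₂ t - κ₂ (t+1)` satisfies `δ (2s) = δ s / 2 - 1` and `δ (2s+1) = δ s / 2 + 1`,
so `δ ≤ 2`, and hence `D (2t+1)` is at least the mean of `D t` and `D (t+1)`. The three
values `D (2t), D (2t+1), D (2t+2)` are therefore all at least `min (D t) (D (t+1))`.
-/

section

variable {α : Type*} [Field α] [LinearOrder α] [IsStrictOrderedRing α]

theorem le_two_mul_of_le_half_add {f : ℕ → α} {c : α}
    (heven : ∀ s, f (2 * s) ≤ f s / 2 + c) (hodd : ∀ s, f (2 * s + 1) ≤ f s / 2 + c) :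
    ∀ t, f t ≤ 2 * c := by
  intro t
  induction t using Nat.strong_induction_on with
  | _ t ih =>
    obtain ⟨s, rfl | rfl⟩ := Nat.even_or_odd' t
    · rcases Nat.eq_zero_or_pos s with rfl | hs
      -- at `t = 0` the bound is self-referential: `f 0 ≤ f 0 / 2 + c`
      · linarith [heven 0]
      · linarith [heven s, ih s (by omega)]
    · linarith [hodd s, ih s (by omega)]

theorem min_le_min_of_double_of_midpoint_le {g : ℕ → α}
    (heven : ∀ t, g (2 * t) = g t) (hodd : ∀ t, (g t + g (t + 1)) / 2 ≤ g (2 * t + 1)) (t : ℕ) :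
    min (g t) (g (t + 1)) ≤
      min (min (g (2 * t)) (g (2 * t + 1))) (min (g (2 * t + 1)) (g (2 * t + 1 + 1))) := by
  have hmid : min (g t) (g (t + 1)) ≤ g (2 * t + 1) := by
    linarith [hodd t, min_le_left (g t) (g (t + 1)), min_le_right (g t) (g (t + 1))]
  rw [show 2 * t + 1 + 1 = 2 * (t + 1) by ring, heven, heven]
  exact le_min (le_min (min_le_left _ _) hmid) (le_min hmid (min_le_right _ _))

end

theorem stmt_15_general (κ2 : ℕ → ℚ)
    (h2e : ∀ t, κ2 (2*t) = κ2 t)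
    (h2o : ∀ t, κ2 (2*t+1) = (κ2 t + κ2 (t+1))/2 + 1) (κ3 : ℕ → ℚ)
    (h3e : ∀ t, κ3 (2*t) = κ3 t)
    (h3o : ∀ t, κ3 (2*t+1) = (κ3 t + κ3 (t+1))/2 + (3/2)*(κ2 t - κ2 (t+1))) :
    ∀ t : ℕ,
      (fun s : ℕ => min (κ2 s - κ3 s / 3) (κ2 (s+1) - κ3 (s+1) / 3)) t
        ≤ min ((fun s : ℕ => min (κ2 s - κ3 s / 3) (κ2 (s+1) - κ3 (s+1) / 3)) (2*t))
            ((fun s : ℕ => min (κ2 s - κ3 s / 3) (κ2 (s+1) - κ3 (s+1) / 3)) (2*t+1)) := by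
  have hsucc (s : ℕ) : 2 * s + 1 + 1 = 2 * (s + 1) := by ring
  have hδ : ∀ s, κ2 s - κ2 (s + 1) ≤ 2 * 1 := by
    refine le_two_mul_of_le_half_add (fun s => ?_) (fun s => ?_)
    · rw [h2o, h2e]; linarith
    · rw [hsucc, h2o, h2e]; linarith
  refine min_le_min_of_double_of_midpoint_le (fun s => ?_) (fun s => ?_)
  · rw [h2e, h3e]
  · rw [h2o, h3o]
    linarith [hδ s]

theorem stmt_15 (κ2 : ℕ → ℚ) (h2z : κ2 0 = 0)
    (h2e : ∀ t, κ2 (2*t) = κ2 t)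
    (h2o : ∀ t, κ2 (2*t+1) = (κ2 t + κ2 (t+1))/2 + 1) (κ3 : ℕ → ℚ) (h3z : κ3 0 = 0)
    (h3e : ∀ t, κ3 (2*t) = κ3 t)
    (h3o : ∀ t, κ3 (2*t+1) = (κ3 t + κ3 (t+1))/2 + (3/2)*(κ2 t - κ2 (t+1))) :
    ∀ t : ℕ,
      (fun s : ℕ => min (κ2 s - κ3 s / 3) (κ2 (s+1) - κ3 (s+1) / 3)) t
        ≤ min ((fun s : ℕ => min (κ2 s - κ3 s / 3) (κ2 (s+1) - κ3 (s+1) / 3)) (2*t))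
            ((fun s : ℕ => min (κ2 s - κ3 s / 3) (κ2 (s+1) - κ3 (s+1) / 3)) (2*t+1)) :=
  stmt_15_general κ2 h2e h2o κ3 h3e h3o
end

section
/- Define S(n) = (κ₂(n), κ₂(n+1), 1)ᵀ and matrices B₀ = [[1,0,0],[1/2,1/2,1],[0,0,1]], B₁ = [[1/2,1/2,1],[0,1,0],[0,0,1]]. Then for all n ≥ 0, S(2n) = B₀·S(n) and S(2n+1) = B₁·S(n). -/
theorem stmt_19_general (κ2 : ℕ → ℚ)
    (h2e : ∀ t, κ2 (2*t) = κ2 t)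
    (h2o : ∀ t, κ2 (2*t+1) = (κ2 t + κ2 (t+1))/2 + 1) :
    ∀ n : ℕ,
      (!![1, 0, 0; 1/2, 1/2, 1; 0, 0, 1] : Matrix (Fin 3) (Fin 3) ℚ).mulVec
          ![κ2 n, κ2 (n+1), 1] = ![κ2 (2*n), κ2 (2*n+1), 1] ∧
      (!![1/2, 1/2, 1; 0, 1, 0; 0, 0, 1] : Matrix (Fin 3) (Fin 3) ℚ).mulVec
          ![κ2 n, κ2 (n+1), 1] = ![κ2 (2*n+1), κ2 (2*n+2), 1] := by
  intro n
  have h2e_succ : κ2 (2*n+2) = κ2 (n+1) := h2e (n+1)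
  constructor <;>
  · ext i
    fin_cases i <;> simp [Matrix.mulVec, dotProduct, Fin.sum_univ_three, h2e, h2o, h2e_succ]; ring

theorem stmt_19 (κ2 : ℕ → ℚ) (h2z : κ2 0 = 0)
    (h2e : ∀ t, κ2 (2*t) = κ2 t)
    (h2o : ∀ t, κ2 (2*t+1) = (κ2 t + κ2 (t+1))/2 + 1) :
    ∀ n : ℕ,
      (!![1, 0, 0; 1/2, 1/2, 1; 0, 0, 1] : Matrix (Fin 3) (Fin 3) ℚ).mulVec
          ![κ2 n, κ2 (n+1), 1] = ![κ2 (2*n), κ2 (2*n+1), 1] ∧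
      (!![1/2, 1/2, 1; 0, 1, 0; 0, 0, 1] : Matrix (Fin 3) (Fin 3) ℚ).mulVec
          ![κ2 n, κ2 (n+1), 1] = ![κ2 (2*n+1), κ2 (2*n+2), 1] :=
  stmt_19_general κ2 h2e h2o
end
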